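/- (Weighted alternation theorem, necessity) Let K be a compact subset of ℝ, n ∈ ℕ, and w : K → [0,∞) a bounded upper semicontinuous function nonzero at at least n+1 points of K. If P_n is the weighted Chebyshev polynomial of degree n on K with respect to w (which has real coefficients), then there exist points x₀ < x₁ < ⋯ < x_n in K such that w(x_j) P_n(x_j) = (−1)^{n−j} ‖P_n‖_{K,w} for j = 0, 1, …, n. -/

import Mathlib

open Polynomial Metric Set

/-- The weighted sup norm `‖P‖_{E,v} = sup_{z ∈ E} v(z) |P(z)|`. -/
noncomputable def wnorm (E : Set ℂ) (v : ℂ → ℝ) (P : Polynomial ℂ) : ℝ :=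
  sSup ((fun z => v z * ‖P.eval z‖) '' E)

/-!
Replacing the coefficients of `P` by their real parts does not increase the weighted norm on
`K ⊆ ℝ`, so this real polynomial `R` is extremal as well, and wherever `R` attains the norm, `P`
is real and equal to `R`. Scanning the extremal set from the right, one collects points where
`Re P` has alternating signs. If fewer than `n + 1` are found, a root placed in each gap between
the sign blocks yields a real polynomial `q` of degree at most `n` with nonpositive `n`-th
coefficient that has the sign of `R` on the extremal set. Then `R - ε q` has smaller weighted
norm for small `ε > 0` (Kolmogorov's criterion), and its monic normalization contradicts
minimality.
-/

open Filter Topology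
open scoped InnerProductSpace Pointwise

theorem UpperSemicontinuousOn.mul_of_nonneg {X : Type*} [TopologicalSpace X] {s : Set X}
    {f g : X → ℝ} (hf : UpperSemicontinuousOn f s) (hg : UpperSemicontinuousOn g s)
    (hf0 : ∀ x ∈ s, 0 ≤ f x) (hg0 : ∀ x ∈ s, 0 ≤ g x) :
    UpperSemicontinuousOn (fun x => f x * g x) s := by
  intro x hx y hy
  obtain ⟨δ, hδy, hδ⟩ : ∃ δ, (f x + δ) * (g x + δ) < y ∧ 0 < δ := by
    have hlim : Tendsto (fun δ => (f x + δ) * (g x + δ)) (𝓝[>] 0) (𝓝 (f x * g x)) := by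
      simpa using ((by fun_prop : Continuous fun δ : ℝ => (f x + δ) * (g x + δ)).tendsto
        0).mono_left nhdsWithin_le_nhds
    exact ((hlim.eventually (gt_mem_nhds hy)).and self_mem_nhdsWithin).exists
  filter_upwards [hf x hx _ (lt_add_of_pos_right _ hδ), hg x hx _ (lt_add_of_pos_right _ hδ),
    self_mem_nhdsWithin] with z hfz hgz hz
  calc f z * g z ≤ (f x + δ) * (g x + δ) :=
        mul_le_mul hfz.le hgz.le (hg0 z hz) (by linarith [hf0 x hx])
    _ < y := hδy

theorem UpperSemicontinuousOn.exists_lt_forall_le {X : Type*} [TopologicalSpace X] {s : Set X}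
    (hs : IsCompact s) {f : X → ℝ} (hf : UpperSemicontinuousOn f s) {c : ℝ}
    (h : ∀ x ∈ s, f x < c) : ∃ c' < c, ∀ x ∈ s, f x ≤ c' := by
  rcases s.eq_empty_or_nonempty with rfl | hne
  · exact ⟨c - 1, by linarith, by simp⟩
  obtain ⟨x, hx, hmax⟩ := hf.exists_isMaxOn hne hs
  exact ⟨f x, h x hx, fun y hy => hmax hy⟩

theorem IsCompact.exists_pos_mul_lt {X : Type*} [TopologicalSpace X] {A : Set X}
    (hA : IsCompact A) {f g : X → ℝ} (hf : ContinuousOn f A) (hg : ContinuousOn g A)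
    (hpos : ∀ x ∈ A, 0 < f x) : ∃ ε > 0, ∀ x ∈ A, ε * g x < f x := by
  obtain ⟨μ, hμ, hμf⟩ := hA.exists_forall_le' hf hpos
  obtain ⟨G, hG⟩ := hA.exists_bound_of_continuousOn hg
  refine ⟨μ / (|G| + 1), by positivity, fun x hx => ?_⟩
  have hgG : g x ≤ |G| := (le_abs_self _).trans ((hG x hx).trans (le_abs_self G))
  calc μ / (|G| + 1) * g x ≤ μ / (|G| + 1) * |G| := by gcongr
    _ < μ := by rw [div_mul_eq_mul_div, div_lt_iff₀ (by positivity)]; nlinarith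
    _ ≤ f x := hμf x hx

theorem norm_sub_smul_lt_norm {E : Type*} [NormedAddCommGroup E] [InnerProductSpace ℝ E]
    {r s : E} {ε : ℝ} (hε : 0 < ε) (h : ε * ‖s‖ ^ 2 < 2 * ⟪s, r⟫_ℝ) : ‖r - ε • s‖ < ‖r‖ := by
  have : ‖r - ε • s‖ ^ 2 < ‖r‖ ^ 2 := by
    rw [norm_sub_sq_real, inner_smul_right, norm_smul, Real.norm_of_nonneg hε.le,
      real_inner_comm]
    nlinarith
  exact (pow_lt_pow_iff_left₀ (norm_nonneg _) (norm_nonneg _) two_ne_zero).1 this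

theorem exists_pos_forall_mul_norm_sub_smul_lt {X E : Type*} [TopologicalSpace X]
    [NormedAddCommGroup E] [InnerProductSpace ℝ E] {K : Set X} (hK : IsCompact K)
    {w : X → ℝ} (hw : UpperSemicontinuousOn w K) (hw0 : ∀ x ∈ K, 0 ≤ w x) {r s : X → E}
    (hr : Continuous r) (hs : Continuous s) {m : ℝ} (hm : 0 < m)
    (hle : ∀ x ∈ K, w x * ‖r x‖ ≤ m)
    (hsign : ∀ x ∈ K, m ≤ w x * ‖r x‖ → 0 < ⟪s x, r x⟫_ℝ) :
    ∃ ε : ℝ, 0 < ε ∧ ∀ x ∈ K, w x * ‖r x - ε • s x‖ < m := by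
  have hwr : UpperSemicontinuousOn (fun x => w x * ‖r x‖) K :=
    hw.mul_of_nonneg (hr.norm.upperSemicontinuous.upperSemicontinuousOn K) hw0
      fun _ _ => norm_nonneg _
  obtain ⟨ε₀, hε₀, hA⟩ := (hwr.isCompact_inter_preimage_Ici hK m).exists_pos_mul_lt
    (f := fun x => 2 * ⟪s x, r x⟫_ℝ) (g := fun x => ‖s x‖ ^ 2) (by fun_prop) (by fun_prop)
    fun x hx => mul_pos two_pos (hsign x hx.1 hx.2)
  -- On the open neighbourhood `U` of the extremal set any `ε ≤ ε₀` shrinks `‖r‖`; on the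
  -- compact set `K \ U` the weighted norm of `r` stays below some `m' < m`.
  set U := {x | ε₀ * ‖s x‖ ^ 2 < 2 * ⟪s x, r x⟫_ℝ}
  have hU : IsOpen U := isOpen_lt (by fun_prop) (by fun_prop)
  obtain ⟨m', hm', hm'le⟩ := (hwr.mono sdiff_subset).exists_lt_forall_le (hK.diff hU)
    fun x hx => (hle x hx.1).lt_of_ne fun h => hx.2 (hA x ⟨hx.1, h.ge⟩)
  obtain ⟨W, hW⟩ := hw.bddAbove_of_isCompact hK
  obtain ⟨S, hS⟩ := hK.exists_bound_of_continuousOn hs.continuousOn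
  set C := (|W| + 1) * (|S| + 1)
  have hC : ∀ x ∈ K, w x * ‖s x‖ ≤ C := fun x hx =>
    mul_le_mul ((hW (mem_image_of_mem w hx)).trans ((le_abs_self W).trans (by linarith)))
      ((hS x hx).trans ((le_abs_self S).trans (by linarith))) (norm_nonneg _) (by positivity)
  set ε := min ε₀ ((m - m') / (2 * C))
  have hε : 0 < ε := lt_min hε₀ (div_pos (by linarith) (by positivity))
  refine ⟨ε, hε, fun x hx => ?_⟩
  by_cases hxU : x ∈ U
  · have hsr : ‖r x - ε • s x‖ < ‖r x‖ := norm_sub_smul_lt_norm hε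
      ((mul_le_mul_of_nonneg_right (min_le_left _ _) (by positivity)).trans_lt hxU)
    rcases (hw0 x hx).eq_or_lt with h0 | hpos
    · rwa [← h0, zero_mul]
    · exact (mul_lt_mul_of_pos_left hsr hpos).trans_le (hle x hx)
  · have hεC : ε * C ≤ (m - m') / 2 := by
      rw [← le_div_iff₀ (by positivity), div_div]
      exact min_le_right _ _
    calc w x * ‖r x - ε • s x‖ ≤ w x * ‖r x‖ + ε * (w x * ‖s x‖) := by
          have := norm_sub_le (r x) (ε • s x)
          rw [norm_smul, Real.norm_of_nonneg hε.le] at this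
          nlinarith [hw0 x hx]
      _ ≤ m' + ε * C :=
          add_le_add (hm'le x ⟨hx, hxU⟩) (mul_le_mul_of_nonneg_left (hC x hx) hε.le)
      _ < m := by linarith

theorem exists_gap_of_isGreatest_pos {A : Set ℝ} {f : ℝ → ℝ} {b v : ℝ} (hf : ContinuousOn f A)
    (hb : IsGreatest {x ∈ A | 0 < f x} b) (hbv : b < v) :
    ∃ t, b < t ∧ t < v ∧ ∀ x ∈ A, b < x → t < x := by
  obtain ⟨δ, hδ, hball⟩ := Metric.mem_nhdsWithin_iff.1 (hf b hb.1.1 (Ioi_mem_nhds hb.1.2))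
  refine ⟨min (b + δ / 2) ((b + v) / 2), lt_min (by linarith) (by linarith),
    (min_le_right _ _).trans_lt (by linarith), fun x hx hbx => not_le.1 fun hxt => ?_⟩
  have hxδ : x ∈ ball b δ := by
    rw [mem_ball, Real.dist_eq, abs_of_pos (by linarith)]
    linarith [min_le_left (b + δ / 2) ((b + v) / 2)]
  exact hbx.not_ge (hb.2 ⟨hx, hball ⟨hxδ, hx⟩⟩)

/-- Negativity of `q` on `[v, ∞)` is what lets the induction step append one linear factor
`X - t` with `t` in the gap to the right of the last positive block. -/
theorem exists_alternation_or_exists_sign_poly (N : ℕ) {A : Set ℝ} {f : ℝ → ℝ} {v : ℝ}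
    (hA : IsCompact A) (hf : ContinuousOn f A) (hf0 : ∀ x ∈ A, f x ≠ 0)
    (hv : ∀ x ∈ A, x < v) :
    (∃ x : Fin (N + 1) → ℝ, StrictMono x ∧ (∀ j, x j ∈ A) ∧
      ∀ j : Fin (N + 1), 0 < (-1) ^ (N - (j : ℕ)) * f (x j)) ∨
    ∃ q : ℝ[X], q.natDegree ≤ N ∧ q.coeff N ≤ 0 ∧ (∀ x ∈ A, 0 < q.eval x * f x) ∧
      ∀ x, v ≤ x → q.eval x < 0 := by
  set B := {x ∈ A | 0 < f x}
  have hB : IsCompact B := by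
    have hBA : B = A ∩ f ⁻¹' Ici 0 := by
      ext x
      exact and_congr_right fun hx => ⟨le_of_lt, fun h => h.lt_of_ne' (hf0 x hx)⟩
    rw [hBA]
    exact hA.of_isClosed_subset (hf.preimage_isClosed_of_isClosed hA.isClosed isClosed_Ici)
      inter_subset_left
  rcases B.eq_empty_or_nonempty with hB0 | hBne
  · refine Or.inr ⟨-1, by simp, ?_, fun x hx => ?_, fun _ _ => by simp⟩
    · rw [coeff_neg, coeff_one]
      split_ifs <;> norm_num
    · have : f x < 0 := (not_lt.1 fun h => hB0.subset ⟨hx, h⟩).lt_of_ne (hf0 x hx)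
      simpa using this
  obtain ⟨b, hb⟩ := hB.exists_isGreatest hBne
  match N with
  | 0 => exact Or.inl ⟨fun _ => b, Fin.strictMono_iff_lt_succ.2 fun i => i.elim0, fun _ => hb.1.1,
      fun _ => by simpa using hb.1.2⟩
  | N + 1 =>
    obtain ⟨t, hbt, htv, hgap⟩ := exists_gap_of_isGreatest_pos hf hb (hv b hb.1.1)
    have hright : ∀ x ∈ A, b < x → f x < 0 := fun x hx hbx =>
      (hf0 x hx).lt_or_gt.resolve_right fun h => hbx.not_ge (hb.2 ⟨hx, h⟩)
    rcases exists_alternation_or_exists_sign_poly N (hA.inter_right isClosed_Iic)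
      (hf.mono inter_subset_left).neg (fun x hx => neg_ne_zero.2 (hf0 x hx.1))
      (fun x hx => (hx.2 : x ≤ b).trans_lt hbt) with ⟨x, hx, hxA, hxf⟩ | ⟨q, hqN, hqc, hqA, hqv⟩
    · have hlast : x (Fin.last N) < b := by
        refine (hxA _).2.lt_of_ne fun h => ?_
        have := hxf (Fin.last N)
        simp only [Fin.val_last, Nat.sub_self, pow_zero, one_mul, Pi.neg_apply, h] at this
        linarith [hb.1.2]
      refine Or.inl ⟨Fin.snoc x b, ?_, fun j => ?_, fun j => ?_⟩
      · simpa [Fin.insertNth_last'] using Fin.strictMono_insertNth_last hx b hlast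
      · induction j using Fin.lastCases with
        | last => simpa using hb.1.1
        | cast j => simpa using (hxA j).1
      · induction j using Fin.lastCases with
        | last => simpa using hb.1.2
        | cast j =>
          have := hxf j
          rw [Fin.snoc_castSucc, Fin.val_castSucc, show N + 1 - (j : ℕ) = N - j + 1 by omega,
            pow_succ]
          simp only [Pi.neg_apply] at this
          linarith
    · refine Or.inr ⟨q * (X - C t), ?_, ?_, fun x hx => ?_, fun x hx => ?_⟩
      · exact natDegree_mul_le.trans (by rw [natDegree_X_sub_C]; omega)
      · rw [coeff_mul_X_sub_C, coeff_eq_zero_of_natDegree_lt (by omega : q.natDegree < N + 1)]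
        simpa
      · simp only [eval_mul, eval_sub, eval_X, eval_C]
        rcases le_or_gt x b with hxb | hxb
        · have := mul_pos (hqA x ⟨hx, hxb⟩) (sub_pos.2 (hxb.trans_lt hbt))
          simp only [Pi.neg_apply] at this
          linarith
        · exact mul_pos_of_neg_of_neg (mul_neg_of_neg_of_pos (hqv x (hgap x hx hxb).le)
            (sub_pos.2 (hgap x hx hxb))) (hright x hx hxb)
      · simp only [eval_mul, eval_sub, eval_X, eval_C]
        nlinarith [hqv x (htv.le.trans hx)]

section WeightedNorm

variable {K : Set ℂ} {w : ℂ → ℝ}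

theorem wnorm_nonneg (hw0 : ∀ z ∈ K, 0 ≤ w z) (Q : ℂ[X]) : 0 ≤ wnorm K w Q :=
  Real.sSup_nonneg <| by
    rintro _ ⟨z, hz, rfl⟩
    exact mul_nonneg (hw0 z hz) (norm_nonneg _)

theorem wnorm_C_mul (a : ℂ) (Q : ℂ[X]) : wnorm K w (C a * Q) = ‖a‖ * wnorm K w Q := by
  have : (fun z => w z * ‖(C a * Q).eval z‖) '' K = ‖a‖ • (fun z => w z * ‖Q.eval z‖) '' K := by
    rw [← image_smul, image_image]
    congr 1
    ext z
    simp only [eval_mul, eval_C, norm_mul, smul_eq_mul]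
    ring
  rw [wnorm, this, Real.sSup_smul_of_nonneg (norm_nonneg a), smul_eq_mul, wnorm]

theorem upperSemicontinuousOn_mul_norm_eval (hw : UpperSemicontinuousOn w K)
    (hw0 : ∀ z ∈ K, 0 ≤ w z) (Q : ℂ[X]) :
    UpperSemicontinuousOn (fun z => w z * ‖Q.eval z‖) K :=
  hw.mul_of_nonneg (Q.continuous.norm.upperSemicontinuous.upperSemicontinuousOn K) hw0
    fun _ _ => norm_nonneg _

theorem le_wnorm (hK : IsCompact K) (hw : UpperSemicontinuousOn w K) (hw0 : ∀ z ∈ K, 0 ≤ w z)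
    (Q : ℂ[X]) {z : ℂ} (hz : z ∈ K) : w z * ‖Q.eval z‖ ≤ wnorm K w Q :=
  le_csSup ((upperSemicontinuousOn_mul_norm_eval hw hw0 Q).bddAbove_of_isCompact hK)
    (mem_image_of_mem _ hz)

theorem exists_eq_wnorm (hK : IsCompact K) (hne : K.Nonempty) (hw : UpperSemicontinuousOn w K)
    (hw0 : ∀ z ∈ K, 0 ≤ w z) (Q : ℂ[X]) : ∃ z ∈ K, w z * ‖Q.eval z‖ = wnorm K w Q := by
  obtain ⟨z, hz, hmax⟩ := (upperSemicontinuousOn_mul_norm_eval hw hw0 Q).exists_isMaxOn hne hK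
  refine ⟨z, hz, (IsGreatest.csSup_eq (s := (fun z => w z * ‖Q.eval z‖) '' K)
    ⟨mem_image_of_mem _ hz, ?_⟩).symm⟩
  rintro _ ⟨y, hy, rfl⟩
  exact hmax hy

theorem wnorm_pos (hK : IsCompact K) (hw : UpperSemicontinuousOn w K) (hw0 : ∀ z ∈ K, 0 ≤ w z)
    {P : ℂ[X]} (hP : P ≠ 0) {S : Finset ℂ} (hSK : ↑S ⊆ K) (hS : P.natDegree < S.card)
    (hSw : ∀ z ∈ S, w z ≠ 0) : 0 < wnorm K w P := by
  obtain ⟨z, hzS, hz⟩ : ∃ z ∈ S, P.eval z ≠ 0 := by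
    by_contra! h
    exact hP (eq_zero_of_natDegree_lt_card_of_eval_eq_zero' P S h hS)
  exact (mul_pos ((hw0 z (hSK hzS)).lt_of_ne' (hSw z hzS)) (norm_pos_iff.2 hz)).trans_le
    (le_wnorm hK hw hw0 P (hSK hzS))

theorem le_wnorm_sub_C_mul_map (hw0 : ∀ z ∈ K, 0 ≤ w z) {n : ℕ} {R : ℂ[X]} (hR : R.Monic)
    (hRn : R.natDegree = n)
    (hmin : ∀ Q : ℂ[X], Q.Monic → Q.natDegree = n → wnorm K w R ≤ wnorm K w Q)
    {q : ℝ[X]} (hq : q.natDegree ≤ n) (hqn : q.coeff n ≤ 0) {ε : ℝ} (hε : 0 ≤ ε) :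
    wnorm K w R ≤ wnorm K w (R - C (ε : ℂ) * q.map Complex.ofRealHom) := by
  set Q := R - C (ε : ℂ) * q.map Complex.ofRealHom
  set L : ℝ := 1 - ε * q.coeff n
  have hL : 1 ≤ L := by nlinarith
  have hQn : Q.coeff n = L := by
    simp [Q, L, ← hRn, hR.coeff_natDegree]
  have hQdeg : Q.natDegree ≤ n := (natDegree_sub_le_of_le hRn.le
    ((natDegree_C_mul_le _ _).trans (natDegree_map_le.trans hq))).trans_eq (max_self n)
  have hLQ : (C (L⁻¹ : ℂ) * Q).coeff n = 1 := by
    rw [coeff_C_mul, hQn]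
    exact inv_mul_cancel₀ (by exact_mod_cast (zero_lt_one.trans_le hL).ne')
  have hLQdeg : (C (L⁻¹ : ℂ) * Q).natDegree ≤ n := (natDegree_C_mul_le _ _).trans hQdeg
  calc wnorm K w R ≤ wnorm K w (C (L⁻¹ : ℂ) * Q) :=
        hmin _ (monic_of_natDegree_le_of_coeff_eq_one n hLQdeg hLQ)
          (natDegree_eq_of_le_of_coeff_ne_zero hLQdeg (hLQ ▸ one_ne_zero))
    _ = L⁻¹ * wnorm K w Q := by
        rw [wnorm_C_mul, norm_inv, Complex.norm_real, Real.norm_of_nonneg (by linarith)]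
    _ ≤ wnorm K w Q := mul_le_of_le_one_left (wnorm_nonneg hw0 Q) (inv_le_one_of_one_le₀ hL)

end WeightedNorm

noncomputable def rePoly (P : ℂ[X]) : ℂ[X] := C (2⁻¹ : ℂ) * (P + P.map (starRingEnd ℂ))

theorem coeff_rePoly (P : ℂ[X]) (i : ℕ) : (rePoly P).coeff i = ((P.coeff i).re : ℂ) := by
  simp only [rePoly, coeff_C_mul, coeff_add, coeff_map, Complex.add_conj]
  push_cast
  ring

theorem eval_rePoly (P : ℂ[X]) (x : ℝ) : (rePoly P).eval (x : ℂ) = ((P.eval (x : ℂ)).re : ℂ) := by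
  have h := eval_map_apply (p := P) (f := starRingEnd ℂ) (x : ℂ)
  rw [Complex.conj_ofReal] at h
  simp only [rePoly, eval_mul, eval_C, eval_add, h, Complex.add_conj]
  push_cast
  ring

theorem natDegree_rePoly_le (P : ℂ[X]) : (rePoly P).natDegree ≤ P.natDegree :=
  natDegree_le_iff_coeff_eq_zero.2 fun i hi => by
    rw [coeff_rePoly, coeff_eq_zero_of_natDegree_lt hi, Complex.zero_re, Complex.ofReal_zero]

theorem coeff_rePoly_natDegree {P : ℂ[X]} (hP : P.Monic) : (rePoly P).coeff P.natDegree = 1 := by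
  rw [coeff_rePoly, hP.coeff_natDegree, Complex.one_re, Complex.ofReal_one]

theorem monic_rePoly {P : ℂ[X]} (hP : P.Monic) : (rePoly P).Monic :=
  monic_of_natDegree_le_of_coeff_eq_one _ (natDegree_rePoly_le P) (coeff_rePoly_natDegree hP)

theorem natDegree_rePoly {P : ℂ[X]} (hP : P.Monic) : (rePoly P).natDegree = P.natDegree :=
  natDegree_eq_of_le_of_coeff_ne_zero (natDegree_rePoly_le P)
    (coeff_rePoly_natDegree hP ▸ one_ne_zero)

theorem abs_eq_neg_one_pow_mul {a : ℝ} {k : ℕ} (h : 0 < (-1) ^ k * a) : |a| = (-1) ^ k * a := by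
  rw [← abs_of_pos h, abs_mul, abs_pow, abs_neg, abs_one, one_pow, one_mul]

section Chebyshev

variable {K : Set ℂ} {w : ℂ → ℝ}

theorem ofReal_mul_eval_eq_neg_one_pow_mul_wnorm {P : ℂ[X]} (hK : IsCompact K)
    (hw : UpperSemicontinuousOn w K) (hw0 : ∀ z ∈ K, 0 ≤ w z) (hm : 0 < wnorm K w P) {x : ℝ}
    (hx : (x : ℂ) ∈ K)
    (hext : wnorm K w P ≤ w x * |(P.eval (x : ℂ)).re|) {k : ℕ}
    (hk : 0 < (-1) ^ k * (P.eval (x : ℂ)).re) :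
    (w x : ℂ) * P.eval (x : ℂ) = (-1) ^ k * (wnorm K w P : ℂ) := by
  set p := P.eval (x : ℂ)
  have hle := le_wnorm hK hw hw0 P hx
  have hwx : 0 < w x := (hw0 _ hx).lt_of_ne fun h => by
    rw [← h, zero_mul] at hext
    linarith
  have hwm : w x * |p.re| = wnorm K w P := le_antisymm
    ((mul_le_mul_of_nonneg_left (Complex.abs_re_le_norm p) hwx.le).trans hle) hext
  have hp : p = p.re := by
    have : |p.re| = ‖p‖ :=
      (Complex.abs_re_le_norm p).antisymm (le_of_mul_le_mul_left (hle.trans hext) hwx)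
    exact Complex.ext rfl (by simp [Complex.abs_re_eq_norm.1 this])
  have hsq : ((-1 : ℝ) ^ k) ^ 2 = 1 := by rw [← pow_mul, pow_mul', neg_one_sq, one_pow]
  rw [abs_eq_neg_one_pow_mul hk] at hwm
  rw [hp]
  exact_mod_cast (by linear_combination (-1) ^ k * hwm - w x * p.re * hsq :
    w x * p.re = (-1) ^ k * wnorm K w P)

theorem not_forall_pos_eval_mul_re {n : ℕ} {P : ℂ[X]} (hK : IsCompact K)
    (hKreal : ∀ z ∈ K, z.im = 0) (hw : UpperSemicontinuousOn w K) (hw0 : ∀ z ∈ K, 0 ≤ w z)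
    (hP : P.Monic) (hPn : P.natDegree = n)
    (hmin : ∀ Q : ℂ[X], Q.Monic → Q.natDegree = n → wnorm K w P ≤ wnorm K w Q)
    (hm : 0 < wnorm K w P) {q : ℝ[X]} (hq : q.natDegree ≤ n) (hqn : q.coeff n ≤ 0) :
    ¬ ∀ x : ℝ, (x : ℂ) ∈ K → wnorm K w P ≤ w x * |(P.eval (x : ℂ)).re| →
      0 < q.eval x * (P.eval (x : ℂ)).re := by
  intro hsign
  set m := wnorm K w P
  have hKne : K.Nonempty := nonempty_iff_ne_empty.2 fun h => by simp [m, h, wnorm] at hm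
  have hreal : ∀ z ∈ K, ∃ x : ℝ, z = x := fun z hz =>
    ⟨z.re, Complex.ext (by simp) (by simp [hKreal z hz])⟩
  set R := rePoly P
  have hRm : wnorm K w R = m := by
    refine le_antisymm ?_ (hmin R (monic_rePoly hP) ((natDegree_rePoly hP).trans hPn))
    obtain ⟨z, hz, hzR⟩ := exists_eq_wnorm hK hKne hw hw0 R
    obtain ⟨x, rfl⟩ := hreal z hz
    rw [← hzR, eval_rePoly, Complex.norm_real, Real.norm_eq_abs]
    exact (mul_le_mul_of_nonneg_left (Complex.abs_re_le_norm _) (hw0 _ hz)).trans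
      (le_wnorm hK hw hw0 P hz)
  obtain ⟨ε, hε, hlt⟩ := exists_pos_forall_mul_norm_sub_smul_lt hK hw hw0 R.continuous
    (q.map Complex.ofRealHom).continuous hm (fun z hz => hRm ▸ le_wnorm hK hw hw0 R hz)
    fun z hz hmz => by
      obtain ⟨x, rfl⟩ := hreal z hz
      rw [eval_rePoly, Complex.norm_real, Real.norm_eq_abs] at hmz
      have hqx : (q.map Complex.ofRealHom).eval (x : ℂ) = q.eval x :=
        eval_map_apply (f := Complex.ofRealHom) x
      simpa [R, eval_rePoly, Complex.inner, hqx, mul_comm] using hsign x hz hmz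
  have hR_lt : wnorm K w (R - C (ε : ℂ) * q.map Complex.ofRealHom) < m := by
    obtain ⟨z, hz, hzQ⟩ :=
      exists_eq_wnorm hK hKne hw hw0 (R - C (ε : ℂ) * q.map Complex.ofRealHom)
    rw [← hzQ]
    simpa [Complex.real_smul] using hlt z hz
  exact hR_lt.not_ge (hRm ▸ le_wnorm_sub_C_mul_map hw0 (monic_rePoly hP)
    ((natDegree_rePoly hP).trans hPn) (fun Q hQ hQn => hRm ▸ hmin Q hQ hQn) hq hqn hε.le)

end Chebyshev

theorem stmt10_general (K : Set ℂ) (hK : IsCompact K) (hKreal : ∀ z ∈ K, z.im = 0)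
    (n : ℕ) (w : ℂ → ℝ)
    (hw0 : ∀ z ∈ K, 0 ≤ w z)
    (husc : UpperSemicontinuousOn w K)
    (hsupp : ∃ S : Finset ℂ, ↑S ⊆ K ∧ n + 1 ≤ S.card ∧ ∀ z ∈ S, w z ≠ 0)
    (P : Polynomial ℂ) (hmonic : P.Monic) (hdeg : P.natDegree = n)
    (hmin : ∀ Q : Polynomial ℂ, Q.Monic → Q.natDegree = n → wnorm K w P ≤ wnorm K w Q) :
    ∃ x : Fin (n + 1) → ℝ, StrictMono x ∧ (∀ j, (x j : ℂ) ∈ K) ∧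
      ∀ j : Fin (n + 1),
        (w (x j) : ℂ) * P.eval ((x j : ℂ)) = (-1 : ℂ) ^ (n - (j : ℕ)) * (wnorm K w P : ℂ) := by
  obtain ⟨S, hSK, hS, hSw⟩ := hsupp
  have hm : 0 < wnorm K w P := wnorm_pos hK husc hw0 hmonic.ne_zero hSK (by omega) hSw
  have hwP : UpperSemicontinuousOn (fun z => w z * |(P.eval z).re|) K :=
    husc.mul_of_nonneg ((by fun_prop : Continuous fun z => |(P.eval z).re|)
      |>.upperSemicontinuous.upperSemicontinuousOn K) hw0 fun _ _ => abs_nonneg _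
  set A : Set ℝ := (↑) ⁻¹' (K ∩ (fun z => w z * |(P.eval z).re|) ⁻¹' Ici (wnorm K w P))
  have hA : IsCompact A := Complex.isometry_ofReal.isClosedEmbedding.isCompact_preimage
    (hwP.isCompact_inter_preimage_Ici hK _)
  have hf0 : ∀ x ∈ A, (P.eval (x : ℂ)).re ≠ 0 := fun x hx h => by
    have : wnorm K w P ≤ w x * |(P.eval (x : ℂ)).re| := hx.2
    rw [h, abs_zero, mul_zero] at this
    linarith
  obtain ⟨v, hv⟩ : ∃ v, ∀ x ∈ A, x < v :=
    let ⟨M, hM⟩ := hA.bddAbove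
    ⟨M + 1, fun x hx => (hM hx).trans_lt (lt_add_one M)⟩
  rcases exists_alternation_or_exists_sign_poly n hA (by fun_prop) hf0 hv with
    ⟨x, hx, hxA, hxP⟩ | ⟨q, hq, hqn, hqP, -⟩
  · exact ⟨x, hx, fun j => (hxA j).1,
      fun j => ofReal_mul_eval_eq_neg_one_pow_mul_wnorm hK husc hw0 hm (hxA j).1 (hxA j).2
        (hxP j)⟩
  · exact absurd (fun x hx hxm => hqP x ⟨hx, hxm⟩)
      (not_forall_pos_eval_mul_re hK hKreal husc hw0 hmonic hdeg hmin hm hq hqn)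

/-- Weighted alternation theorem (necessity). -/
theorem stmt10 (K : Set ℂ) (hK : IsCompact K) (hKreal : ∀ z ∈ K, z.im = 0)
    (n : ℕ) (w : ℂ → ℝ)
    (hw0 : ∀ z ∈ K, 0 ≤ w z) (hwb : BddAbove (w '' K))
    (husc : UpperSemicontinuousOn w K)
    (hsupp : ∃ S : Finset ℂ, ↑S ⊆ K ∧ n + 1 ≤ S.card ∧ ∀ z ∈ S, w z ≠ 0)
    (P : Polynomial ℂ) (hmonic : P.Monic) (hdeg : P.natDegree = n)
    (hmin : ∀ Q : Polynomial ℂ, Q.Monic → Q.natDegree = n → wnorm K w P ≤ wnorm K w Q) :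
    ∃ x : Fin (n + 1) → ℝ, StrictMono x ∧ (∀ j, (x j : ℂ) ∈ K) ∧
      ∀ j : Fin (n + 1),
        (w (x j) : ℂ) * P.eval ((x j : ℂ)) = (-1 : ℂ) ^ (n - (j : ℕ)) * (wnorm K w P : ℂ) :=
  stmt10_general K hK hKreal n w hw0 husc hsupp P hmonic hdeg hmin
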